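/- arXiv:1812.08313 — 9 statements merged into one kernel-verified Lean document; each statement's English description precedes it below -/
import Mathlib

section
/- Let G be a PCR over a PCS Σ. The following are equivalent: (1) G is non-degenerate (no element a satisfies both a ≤_G a* and a* ≤_G a); (2) every maximal G-coherent subset of Σ is a complete *-selection (i.e., for every a ∈ Σ, exactly one of a, a* belongs to it); (3) some maximal G-coherent subset of Σ is a complete *-selection. -/
/-!
Coherence forbids `a, a* ∈ S` together, so the point is that a maximal coherent `S` contains
`a` or `a*`. If it contains neither, maximality yields `b ∈ S ∪ {a}` with `a ≤ b*` and
`c ∈ S ∪ {a*}` with `c ≤ a`; in each of the four cases the chain `c ≤ a ≤ b*` either breaks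
coherence of `S` or makes `a` and `a*` both negligible. Conversely, a coherent complete
selection contains `a` or `a*`, and neither may be negligible. Zorn supplies a maximal coherent
set, which links the "every" and "some" forms.
-/

universe u v

structure PCS (α : Type*) where
  star : α → α
  zero : α
  star_star : ∀ a, star (star a) = a
  star_ne_self : ∀ a, star a ≠ a

variable {α : Type*}

/-- A pointed complemented relation (PCR) over the PCS `P`. -/
def IsPCR (P : PCS α) (G : Set (α × α)) : Prop :=
  (∀ a, (P.zero, a) ∈ G) ∧ ∀ a b, (a, b) ∈ G ↔ (P.star b, P.star a) ∈ G

/-- `a ≤_G b`: the reflexive-transitive closure of the relation `G`. -/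
def pcrLe (G : Set (α × α)) (a b : α) : Prop :=
  Relation.ReflTransGen (fun x y => (x, y) ∈ G) a b

/-- A set `S` is `G`-coherent if no `a, b ∈ S` satisfy `a ≤_G b*`. -/
def Coherent (P : PCS α) (G : Set (α × α)) (S : Set α) : Prop :=
  ∀ a ∈ S, ∀ b ∈ S, ¬ pcrLe G a (P.star b)

/-- Forward closure `↑S = {b | ∃ a ∈ S, a ≤_G b}`. -/
def upClosure (G : Set (α × α)) (S : Set α) : Set α :=
  {b | ∃ a ∈ S, pcrLe G a b}

/-- Maximal `G`-coherent subsets; the members of the dual space `G°`. -/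
def MaxCoherent (P : PCS α) (G : Set (α × α)) (S : Set α) : Prop :=
  Coherent P G S ∧ ∀ T, Coherent P G T → S ⊆ T → S = T

/-- `G` is non-degenerate: no `a` satisfies both `a ≤_G a*` and `a* ≤_G a`. -/
def Nondegenerate (P : PCS α) (G : Set (α × α)) : Prop :=
  ∀ a, ¬ (pcrLe G a (P.star a) ∧ pcrLe G (P.star a) a)

/-- A complete `*`-selection: exactly one of `a`, `a*` belongs to `S`, for each `a`. -/
def CompleteSel (P : PCS α) (S : Set α) : Prop :=
  ∀ a, Xor' (a ∈ S) (P.star a ∈ S)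

/-- The half-space `⟨S;G⟩ = {u ∈ G° : S ⊆ u}`. -/
def halfspace (P : PCS α) (G : Set (α × α)) (S : Set α) : Set (Set α) :=
  {u | MaxCoherent P G u ∧ S ⊆ u}

/-- Coherent projection `coh_G(T) = ↑T ∖ (↑T)*`. -/
def cohProj (P : PCS α) (G : Set (α × α)) (T : Set α) : Set α :=
  upClosure G T \ (P.star '' upClosure G T)

/-- Morphisms of PCRs. -/
def IsPCRHom {β : Type*} (P : PCS α) (Q : PCS β) (G : Set (α × α)) (H : Set (β × β))
    (f : α → β) : Prop :=
  f P.zero = Q.zero ∧ (∀ a, f (P.star a) = Q.star (f a)) ∧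
    ∀ a b, (a, b) ∈ G → pcrLe H (f a) (f b)

/-- A poc set: a PCR whose induced relation `≤_G` is antisymmetric and whose only
negligible element is `0`. -/
def IsPocSet (P : PCS α) (G : Set (α × α)) : Prop :=
  IsPCR P G ∧ (∀ a b, pcrLe G a b → pcrLe G b a → a = b) ∧
    ∀ a, pcrLe G a (P.star a) → a = P.zero

section

variable {P : PCS α} {G : Set (α × α)} {S : Set α}

lemma pcrLe_star_star (hG : IsPCR P G) {a b : α} (h : pcrLe G a b) :
    pcrLe G (P.star b) (P.star a) := by
  induction h with
  | refl => exact .refl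
  | tail _ hbc ih => exact .head ((hG.2 _ _).mp hbc) ih

lemma pcrLe_star_star_iff (hG : IsPCR P G) {a b : α} :
    pcrLe G (P.star b) (P.star a) ↔ pcrLe G a b :=
  ⟨fun h => by simpa only [P.star_star] using pcrLe_star_star hG h, pcrLe_star_star hG⟩

lemma pcrLe_star_comm (hG : IsPCR P G) {a b : α} :
    pcrLe G a (P.star b) ↔ pcrLe G b (P.star a) := by
  rw [← pcrLe_star_star_iff hG, P.star_star]

lemma exists_maxCoherent (P : PCS α) (G : Set (α × α)) : ∃ S, MaxCoherent P G S := by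
  obtain ⟨m, hm⟩ := zorn_subset {S | Coherent P G S} fun c hc hchain => by
    refine ⟨⋃₀ c, ?_, fun s hs => Set.subset_sUnion_of_mem hs⟩
    rintro a ⟨s, hs, has⟩ b ⟨t, ht, hbt⟩
    rcases hchain.total hs ht with h | h
    · exact hc ht a (h has) b hbt
    · exact hc hs a has b (h hbt)
  exact ⟨m, hm.1, fun T hT hsub => hsub.antisymm (hm.2 hT hsub)⟩

namespace Coherent

lemma star_notMem (hS : Coherent P G S) {a : α} (ha : a ∈ S) : P.star a ∉ S :=
  fun ha' => hS a ha (P.star a) ha' (by rw [P.star_star]; exact .refl)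

lemma not_pcrLe_star_of_le (hG : IsPCR P G) (hS : Coherent P G S) {a c : α} (hc : c ∈ S)
    (hca : pcrLe G c a) : ¬ pcrLe G a (P.star a) := fun ha =>
  hS c hc c hc (hca.trans (ha.trans (pcrLe_star_star hG hca)))

lemma nondegenerate_of_completeSel (hS : Coherent P G S) (hsel : CompleteSel P S) :
    Nondegenerate P G := by
  rintro a ⟨ha, ha'⟩
  rcases hsel a with ⟨hmem, -⟩ | ⟨hmem, -⟩
  · exact hS a hmem a hmem ha
  · exact hS _ hmem _ hmem (by rwa [P.star_star])

end Coherent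

namespace MaxCoherent

lemma exists_pcrLe_star_of_notMem (hG : IsPCR P G) (hS : MaxCoherent P G S) {x : α}
    (hx : x ∉ S) : ∃ b ∈ insert x S, pcrLe G x (P.star b) := by
  have hnc : ¬ Coherent P G (insert x S) := fun h =>
    hx (hS.2 _ h (Set.subset_insert x S) ▸ Set.mem_insert x S)
  simp only [Coherent, not_forall, not_not] at hnc
  obtain ⟨u, hu, v, hv, huv⟩ := hnc
  rcases hu with rfl | hu
  · exact ⟨v, hv, huv⟩
  rcases hv with rfl | hv
  · exact ⟨u, Set.mem_insert_of_mem _ hu, (pcrLe_star_comm hG).mp huv⟩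
  · exact absurd huv (hS.1 u hu v hv)

lemma mem_or_star_mem (hG : IsPCR P G) (hnd : Nondegenerate P G) (hS : MaxCoherent P G S)
    (a : α) : a ∈ S ∨ P.star a ∈ S := by
  by_contra! ⟨ha, ha'⟩
  obtain ⟨b, hb, hab⟩ := hS.exists_pcrLe_star_of_notMem hG ha
  obtain ⟨c, hc, hac⟩ := hS.exists_pcrLe_star_of_notMem hG ha'
  rw [pcrLe_star_star_iff hG] at hac
  rcases hb with rfl | hb <;> rcases hc with rfl | hc
  · exact hnd b ⟨hab, hac⟩
  · exact hS.1.not_pcrLe_star_of_le hG hc hac hab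
  · refine hS.1.not_pcrLe_star_of_le hG hb ((pcrLe_star_comm hG).mp hab) ?_
    rwa [P.star_star]
  · exact hS.1 c hc b hb (hac.trans hab)

lemma completeSel (hG : IsPCR P G) (hnd : Nondegenerate P G) (hS : MaxCoherent P G S) :
    CompleteSel P S := fun a => by
  rcases hS.mem_or_star_mem hG hnd a with h | h
  · exact .inl ⟨h, hS.1.star_notMem h⟩
  · exact .inr ⟨h, by simpa only [P.star_star] using hS.1.star_notMem h⟩

end MaxCoherent

end

/-- Non-degeneracy is equivalent to every (equivalently, some) maximal coherent set
being a complete `*`-selection. -/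
theorem stmt1 (P : PCS α) (G : Set (α × α)) (hG : IsPCR P G) :
    (Nondegenerate P G ↔ ∀ S, MaxCoherent P G S → CompleteSel P S) ∧
    (Nondegenerate P G ↔ ∃ S, MaxCoherent P G S ∧ CompleteSel P S) := by
  obtain ⟨S₀, hS₀⟩ := exists_maxCoherent P G
  have nondegenerate_of_exists : (∃ S, MaxCoherent P G S ∧ CompleteSel P S) → Nondegenerate P G :=
    fun ⟨_, hS, hsel⟩ => hS.1.nondegenerate_of_completeSel hsel
  refine ⟨⟨fun hnd S hS => hS.completeSel hG hnd, fun h => nondegenerate_of_exists ⟨S₀, hS₀, h S₀ hS₀⟩⟩,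
    ⟨fun hnd => ⟨S₀, hS₀, hS₀.completeSel hG hnd⟩, nondegenerate_of_exists⟩⟩
end

section
/- Let G be a non-degenerate PCR over a PCS Σ. For every nonempty set X and every PCS morphism ρ : Σ → P(X) (power set with complementation A* = X∖A and 0 = ∅) that is also order-preserving (a ≤_G b implies ρ(a) ⊆ ρ(b)), every complete *-selection u on Σ witnessed by a point of X (i.e., there is x ∈ X with x ∈ ρ(a) for all a ∈ u) is a maximal G-coherent set, i.e., u ∈ G°. Moreover, G° is the smallest subset of the set of complete *-selections with this property over all such (X, ρ). -/
universe u v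

variable {α : Type*}

lemma pcrLe_dual {P : PCS α} {G : Set (α × α)} (hG : IsPCR P G) {a b : α}
    (h : pcrLe G a b) : pcrLe G (P.star b) (P.star a) := by
  induction h with
  | refl => exact Relation.ReflTransGen.refl
  | tail h' hstep ih =>
    exact (Relation.ReflTransGen.single ((hG.2 _ _).mp hstep)).trans ih

lemma zero_not_mem_coherent {P : PCS α} {G : Set (α × α)} (hG : IsPCR P G) {v : Set α}
    (hv : Coherent P G v) : P.zero ∉ v := fun h =>
  hv P.zero h P.zero h (Relation.ReflTransGen.single (hG.1 _))

lemma extend_incoherent {P : PCS α} {G : Set (α × α)} (hG : IsPCR P G) {v : Set α}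
    (hv : Coherent P G v) {a : α} (h : ¬ Coherent P G (insert a v)) :
    pcrLe G a (P.star a) ∨ ∃ c ∈ v, pcrLe G a (P.star c) := by
  simp only [Coherent, not_forall] at h
  obtain ⟨b, hb, c, hc, hbc⟩ := h
  rw [not_not] at hbc
  rcases hb with rfl | hb
  · rcases hc with rfl | hc
    · exact Or.inl hbc
    · exact Or.inr ⟨c, hc, hbc⟩
  · rcases hc with rfl | hc
    · have := pcrLe_dual hG hbc
      rw [P.star_star] at this
      exact Or.inr ⟨b, hb, this⟩
    · exact absurd hbc (hv b hb c hc)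

lemma maxCoherent_completeSel {P : PCS α} {G : Set (α × α)} (hG : IsPCR P G)
    (hnd : Nondegenerate P G) {u : Set α} (hu : MaxCoherent P G u) : CompleteSel P u := by
  intro a
  have hnot : ¬ (a ∈ u ∧ P.star a ∈ u) := fun ⟨h1, h2⟩ =>
    hu.1 a h1 (P.star a) h2 (by rw [P.star_star]; exact Relation.ReflTransGen.refl)
  rcases Classical.em (a ∈ u) with h | h
  · exact Or.inl ⟨h, fun h' => hnot ⟨h, h'⟩⟩
  · refine Or.inr ⟨?_, h⟩
    by_contra hs
    have h1 : ¬ Coherent P G (insert a u) := fun hc =>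
      h (((hu.2 _ hc (Set.subset_insert _ _)) ▸ Set.mem_insert a u : a ∈ u))
    have h2 : ¬ Coherent P G (insert (P.star a) u) := fun hc =>
      hs (((hu.2 _ hc (Set.subset_insert _ _)) ▸ Set.mem_insert (P.star a) u : P.star a ∈ u))
    have H1 := extend_incoherent hG hu.1 h1
    have H2 := extend_incoherent hG hu.1 h2
    rw [P.star_star] at H2
    rcases H1 with h1' | ⟨c, hc, hc'⟩
    · rcases H2 with h2' | ⟨d, hd, hd'⟩
      · exact hnd a ⟨h1', h2'⟩
      · have hda : pcrLe G d a := by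
          have := pcrLe_dual hG hd'
          simpa only [P.star_star] using this
        exact hu.1 d hd d hd ((hda.trans h1').trans hd')
    · have hca : pcrLe G c (P.star a) := by
        have := pcrLe_dual hG hc'
        simpa only [P.star_star] using this
      rcases H2 with h2' | ⟨d, hd, hd'⟩
      · exact hu.1 c hc c hc ((hca.trans h2').trans hc')
      · exact hu.1 c hc d hd (hca.trans hd')

/-- Universality of representation: `G°` contains every possible world witnessed under
any order-preserving realization, and is the smallest such set. -/
theorem stmt3 {α : Type u} (P : PCS α) (G : Set (α × α)) (hG : IsPCR P G)
    (hnd : Nondegenerate P G) :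
    (∀ (X : Type u), Nonempty X → ∀ ρ : α → Set X,
      ρ P.zero = ∅ → (∀ a, ρ (P.star a) = (ρ a)ᶜ) →
      (∀ a b, pcrLe G a b → ρ a ⊆ ρ b) →
      ∀ u : Set α, CompleteSel P u → (∃ x, ∀ a ∈ u, x ∈ ρ a) → MaxCoherent P G u) ∧
    (∀ W : Set (Set α),
      (∀ (X : Type u), Nonempty X → ∀ ρ : α → Set X,
        ρ P.zero = ∅ → (∀ a, ρ (P.star a) = (ρ a)ᶜ) →
        (∀ a b, pcrLe G a b → ρ a ⊆ ρ b) →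
        ∀ u : Set α, CompleteSel P u → (∃ x, ∀ a ∈ u, x ∈ ρ a) → u ∈ W) →
      {u | MaxCoherent P G u} ⊆ W) := by
  constructor
  · rintro X hX ρ hz hs hmono u hu ⟨x, hx⟩
    constructor
    · intro a ha b hb hab
      have h1 : x ∈ ρ a := hx a ha
      have h2 : x ∈ ρ b := hx b hb
      have := hmono a (P.star b) hab h1
      rw [hs] at this
      exact this h2
    · intro T hT hsub
      refine Set.Subset.antisymm hsub fun t ht => ?_
      by_contra htu
      have hstar : P.star t ∈ u := by
        rcases hu t with ⟨h1, _⟩ | ⟨h1, _⟩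
        · exact absurd h1 htu
        · exact h1
      exact hT t ht (P.star t) (hsub hstar)
        (by rw [P.star_star]; exact Relation.ReflTransGen.refl)
  · intro W hW u hu
    have hcs : ∀ v : {v : Set α // MaxCoherent P G v}, CompleteSel P v.1 :=
      fun v => maxCoherent_completeSel hG hnd v.2
    refine hW {v : Set α // MaxCoherent P G v} ⟨⟨u, hu⟩⟩ (fun a => {v | a ∈ v.1})
      ?_ ?_ ?_ u (maxCoherent_completeSel hG hnd hu) ⟨⟨u, hu⟩, fun a ha => ha⟩
    · ext v
      simp only [Set.mem_setOf_eq, Set.mem_empty_iff_false, iff_false]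
      exact zero_not_mem_coherent hG v.2.1
    · intro a
      ext v
      simp only [Set.mem_setOf_eq, Set.mem_compl_iff]
      rcases hcs v a with ⟨h1, h2⟩ | ⟨h1, h2⟩
      · exact ⟨fun h => absurd h h2, fun h => absurd h1 h⟩
      · exact ⟨fun _ => h2, fun _ => h1⟩
    · intro a b hab v hv
      by_contra hb
      have hbs : P.star b ∈ v.1 := by
        rcases hcs v b with ⟨h1, _⟩ | ⟨h1, _⟩
        · exact absurd h1 hb
        · exact h1
      exact v.2.1 a hv (P.star b) hbs (by rwa [P.star_star])
end

section
/- Let G be a PCR over a finite PCS Σ and define the coherent projection coh_G(T) := ↑T ∖ (↑T)* for T ⊆ Σ. Then: (a) coh_G(T) is G-coherent and forward-closed; (b) coh_G(coh_G(T)) = coh_G(T); (c) if T is G-coherent then T ⊆ coh_G(T); (d) coh_G(T) = T if and only if T is G-coherent and forward-closed. Hence coh_G is an idempotent self-map of the power set of Σ whose image is exactly the set of forward-closed coherent subsets. -/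
universe u v

variable {α : Type*}

section CoherentProjection

variable {P : PCS α} {G : Set (α × α)} {S T : Set α} {a b : α}

theorem IsPCR.pcrLe_star (hG : IsPCR P G) (h : pcrLe G a b) :
    pcrLe G (P.star b) (P.star a) := by
  induction h with
  | refl => exact .refl
  | tail _ hbc ih => exact .head ((hG.2 _ _).mp hbc) ih

theorem mem_upClosure_of_pcrLe (ha : a ∈ upClosure G T) (hab : pcrLe G a b) :
    b ∈ upClosure G T := by
  obtain ⟨c, hc, hca⟩ := ha
  exact ⟨c, hc, hca.trans hab⟩

theorem subset_upClosure : T ⊆ upClosure G T :=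
  fun a ha => ⟨a, ha, .refl⟩

theorem mem_cohProj :
    a ∈ cohProj P G T ↔ a ∈ upClosure G T ∧ P.star a ∉ upClosure G T := by
  rw [cohProj, Set.mem_sdiff, Set.image_eq_preimage_of_inverse P.star_star P.star_star,
    Set.mem_preimage]

theorem coherent_cohProj : Coherent P G (cohProj P G T) := by
  intro a ha b hb hab
  exact (mem_cohProj.mp hb).2 (mem_upClosure_of_pcrLe (mem_cohProj.mp ha).1 hab)

theorem upClosure_cohProj (hG : IsPCR P G) :
    upClosure G (cohProj P G T) = cohProj P G T := by
  refine subset_antisymm ?_ subset_upClosure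
  rintro b ⟨a, ha, hab⟩
  rw [mem_cohProj] at ha ⊢
  refine ⟨mem_upClosure_of_pcrLe ha.1 hab, fun hb => ha.2 ?_⟩
  exact mem_upClosure_of_pcrLe hb (hG.pcrLe_star hab)

theorem subset_cohProj_of_coherent (hT : Coherent P G T) : T ⊆ cohProj P G T := by
  intro a ha
  refine mem_cohProj.mpr ⟨subset_upClosure ha, ?_⟩
  rintro ⟨c, hc, hca⟩
  exact hT c hc a ha hca

theorem cohProj_eq_self_iff (hG : IsPCR P G) :
    cohProj P G S = S ↔ Coherent P G S ∧ upClosure G S = S := by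
  constructor
  · intro h
    exact ⟨h ▸ coherent_cohProj, h ▸ upClosure_cohProj hG⟩
  · rintro ⟨hc, hu⟩
    refine subset_antisymm (fun a ha => ?_) (subset_cohProj_of_coherent hc)
    exact hu ▸ (mem_cohProj.mp ha).1

theorem cohProj_cohProj (hG : IsPCR P G) :
    cohProj P G (cohProj P G T) = cohProj P G T :=
  (cohProj_eq_self_iff hG).mpr ⟨coherent_cohProj, upClosure_cohProj hG⟩

theorem range_cohProj (hG : IsPCR P G) :
    Set.range (cohProj P G) = {S | Coherent P G S ∧ upClosure G S = S} := by
  ext S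
  constructor
  · rintro ⟨T, rfl⟩
    exact ⟨coherent_cohProj, upClosure_cohProj hG⟩
  · intro hS
    exact ⟨S, (cohProj_eq_self_iff hG).mpr hS⟩

end CoherentProjection

theorem stmt8_general (P : PCS α) (G : Set (α × α)) (hG : IsPCR P G) :
    (∀ T : Set α, Coherent P G (cohProj P G T) ∧
        upClosure G (cohProj P G T) = cohProj P G T) ∧
    (∀ T : Set α, cohProj P G (cohProj P G T) = cohProj P G T) ∧
    (∀ T : Set α, Coherent P G T → T ⊆ cohProj P G T) ∧
    (∀ T : Set α, cohProj P G T = T ↔ Coherent P G T ∧ upClosure G T = T) ∧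
    Set.range (cohProj P G) = {S | Coherent P G S ∧ upClosure G S = S} :=
  ⟨fun _ => ⟨coherent_cohProj, upClosure_cohProj hG⟩, fun _ => cohProj_cohProj hG,
    fun _ => subset_cohProj_of_coherent, fun _ => cohProj_eq_self_iff hG, range_cohProj hG⟩

/-- Coherent projection is an idempotent whose image is exactly the forward-closed
coherent subsets. -/
theorem stmt8 [Finite α] (P : PCS α) (G : Set (α × α)) (hG : IsPCR P G) :
    (∀ T : Set α, Coherent P G (cohProj P G T) ∧
        upClosure G (cohProj P G T) = cohProj P G T) ∧
    (∀ T : Set α, cohProj P G (cohProj P G T) = cohProj P G T) ∧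
    (∀ T : Set α, Coherent P G T → T ⊆ cohProj P G T) ∧
    (∀ T : Set α, cohProj P G T = T ↔ Coherent P G T ∧ upClosure G T = T) ∧
    Set.range (cohProj P G) = {S | Coherent P G S ∧ upClosure G S = S} :=
  stmt8_general P G hG
end

section
/- Let ω be a 2-ranking on a finite PCS Σ and let δ ∈ ℕ ∪ {∞} with δ ≥ ω_∅. Define R(ω;δ) by: (a,b) ∈ R(ω;δ) iff {a,a*} ∩ {b,b*} = ∅ and ω_{ab*} > δ (for δ < ∞; with ω_{ab*} = ∞ when δ = ∞). Then R(ω;δ) is a non-degenerate PCR: no element a satisfies both a ≤ a* and a* ≤ a in the reflexive-transitive closure of R(ω;δ). -/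
universe u v

variable {α : Type*}

/-- The Hamming cube: complete `*`-selections containing `1 = 0*`. -/
def Hcube (P : PCS α) : Set (Set α) :=
  {u | CompleteSel P u ∧ P.star P.zero ∈ u}

/-- `⟨S⟩ = {u ∈ H : S ⊆ u}`. -/
def halfCube (P : PCS α) (S : Set α) : Set (Set α) :=
  {u | u ∈ Hcube P ∧ S ⊆ u}

/-- A ranking on the Hamming cube. -/
def IsRanking (P : PCS α) (κ : Set (Set α) → ℕ∞) : Prop :=
  (∀ F, F ⊆ Hcube P → κ F = ⨅ u ∈ F, κ {u}) ∧
    (∃ u ∈ Hcube P, κ {u} < ⊤) ∧ κ ∅ = ⊤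

/-- A 2-ranking on the PCS `P`. -/
def Is2Ranking (P : PCS α) (ω : α → α → ℕ∞) : Prop :=
  (∀ a b, ω a b = ω b a) ∧
  (∀ a, ω P.zero a = ⊤) ∧
  (∀ a, ω a (P.star a) = ⊤) ∧
  (∀ a b, min (ω a a) (ω (P.star a) (P.star a)) = min (ω b b) (ω (P.star b) (P.star b))) ∧
  (∀ a, min (ω a a) (ω (P.star a) (P.star a)) < ⊤) ∧
  (∀ a b, ω a a = min (ω a b) (ω a (P.star b))) ∧
  (∀ a b c, min (ω a (P.star b)) (ω b (P.star c)) ≤ ω a (P.star c))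

/-- The residual PCR `R(ω;δ)` of a 2-ranking is a non-degenerate PCR. -/
theorem stmt13 [Finite α] (P : PCS α) (ω : α → α → ℕ∞) (hω : Is2Ranking P ω)
    (δ : ℕ∞) (hδ : ∀ a, min (ω a a) (ω (P.star a) (P.star a)) ≤ δ)
    (R : Set (α × α))
    (hR : ∀ a b, (a, b) ∈ R ↔
      (({a, P.star a} : Set α) ∩ {b, P.star b} = ∅) ∧
      ((δ < ⊤ ∧ δ < ω a (P.star b)) ∨ (δ = ⊤ ∧ ω a (P.star b) = ⊤))) :
    (∀ a b, (a, b) ∈ R ↔ (P.star b, P.star a) ∈ R) ∧ Nondegenerate P R := by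
  obtain ⟨hsym, hzero, hstar, hmin_eq, hmin_lt, hsplit, htri⟩ := hω
  have key : ∀ a b, pcrLe R a b → a = b ∨
      ((δ < ⊤ ∧ δ < ω a (P.star b)) ∨ (δ = ⊤ ∧ ω a (P.star b) = ⊤)) := by
    intro a b h
    induction h with
    | refl => exact Or.inl rfl
    | @tail b c hab hbc ih =>
      right
      have hc := ((hR b c).1 hbc).2
      rcases ih with rfl | ih
      · exact hc
      · have ht := htri a b c
        rcases ih with ⟨hd, h1⟩ | ⟨hd, h1⟩
        · rcases hc with ⟨_, h2⟩ | ⟨hd', _⟩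
          · exact Or.inl ⟨hd, lt_of_lt_of_le (lt_min h1 h2) ht⟩
          · exact absurd hd' (by simp [hd.ne])
        · rcases hc with ⟨hd', _⟩ | ⟨_, h2⟩
          · exact absurd hd (by simp [hd'.ne])
          · exact Or.inr ⟨hd, top_le_iff.1 (le_trans (by simp [h1, h2]) ht)⟩
  constructor
  · intro a b
    rw [hR, hR]
    constructor <;> rintro ⟨hdisj, hcond⟩
    · refine ⟨?_, by simpa [P.star_star, hsym (P.star b) a] using hcond⟩
      rw [Set.eq_empty_iff_forall_notMem] at hdisj ⊢
      intro x hx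
      simp only [Set.mem_inter_iff, Set.mem_insert_iff, Set.mem_singleton_iff,
        P.star_star] at hx ⊢
      exact hdisj x ⟨by tauto, by tauto⟩
    · refine ⟨?_, by simpa [P.star_star, hsym (P.star b) a] using hcond⟩
      rw [Set.eq_empty_iff_forall_notMem] at hdisj ⊢
      intro x hx
      simp only [Set.mem_inter_iff, Set.mem_insert_iff, Set.mem_singleton_iff,
        P.star_star] at hx ⊢
      rcases hx with ⟨h1, h2⟩
      exact hdisj (P.star x) ⟨by rcases h2 with h | h <;> simp [h, P.star_star],
        by rcases h1 with h | h <;> simp [h, P.star_star]⟩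
  · intro a ⟨h1, h2⟩
    have hne : a ≠ P.star a := fun h => P.star_ne_self a h.symm
    have k1 := (key a (P.star a) h1).resolve_left hne
    have k2 := (key (P.star a) a h2).resolve_left (Ne.symm hne)
    rw [P.star_star] at k1
    rcases k1 with ⟨hd, k1⟩ | ⟨hd, k1⟩
    · rcases k2 with ⟨_, k2⟩ | ⟨hd', _⟩
      · exact absurd (hδ a) (not_le.2 (lt_min k1 k2))
      · exact absurd hd' (by simp [hd.ne])
    · rcases k2 with ⟨hd', _⟩ | ⟨_, k2⟩
      · exact absurd hd (by simp [hd'.ne])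
      · exact absurd (hmin_lt a) (by simp [k1, k2])
end

section
/- Let ω be a 2-ranking on a finite PCS Σ. For any a, b ∈ Σ with r := ω_{ab} < ∞, there exists a complete *-selection u ∈ H such that the point-mass ranking ν = δ_{u,r} (ν(F) = r if u ∈ F, ∞ otherwise) satisfies ω^ν_{pq} ≥ ω_{pq} for all p, q ∈ Σ, where ω^ν_{pq} := ν(⟨{p,q}⟩). -/
universe u v

variable {α : Type*}

open Classical in
/-- Point-mass clamp: for any entry `r = ω_{ab} < ∞` of a 2-ranking there is a vertex
`u` of the Hamming cube whose point-mass ranking dominates `ω` entrywise. -/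
theorem stmt14 [Finite α] (P : PCS α) (ω : α → α → ℕ∞) (hω : Is2Ranking P ω)
    (a b : α) (hr : ω a b < ⊤) :
    ∃ u ∈ Hcube P, ∀ p q : α,
      ω p q ≤ if p ∈ u ∧ q ∈ u then ω a b else ⊤ := by
  classical
  obtain ⟨hsymm, hzero, hstar, hmin4, _hmin5, hself, htri⟩ := hω
  set r := ω a b with hrdef
  have haa : ω a a ≤ r := by
    rw [hself a b]; exact min_le_left _ _
  have hkey : ∀ p, min (ω p p) (ω (P.star p) (P.star p)) ≤ r := fun p => by
    calc min (ω p p) (ω (P.star p) (P.star p))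
        = min (ω a a) (ω (P.star a) (P.star a)) := hmin4 p a
      _ ≤ ω a a := min_le_left _ _
      _ ≤ r := haa
  have h11 : ω (P.star P.zero) (P.star P.zero) ≤ r := by
    have h := hkey P.zero
    rwa [hzero P.zero, min_eq_right le_top] at h
  set S : Set (Set α) := {s | ∀ p ∈ s, ∀ q ∈ s, ω p q ≤ r} with hS
  have hchain : ∀ c ⊆ S, IsChain (· ⊆ ·) c → c.Nonempty →
      ∃ ub ∈ S, ∀ s ∈ c, s ⊆ ub := by
    intro c hcS hc _
    refine ⟨⋃₀ c, ?_, fun s hs => Set.subset_sUnion_of_mem hs⟩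
    rintro p ⟨s, hs, hp⟩ q ⟨t, ht, hq⟩
    rcases hc.total hs ht with h | h
    · exact hcS ht p (h hp) q hq
    · exact hcS hs p hp q (h hq)
  have hx : ({P.star P.zero} : Set α) ∈ S := by
    rintro p rfl q rfl
    exact h11
  obtain ⟨u, hxu, humax⟩ := zorn_subset_nonempty S hchain _ hx
  have h1u : P.star P.zero ∈ u := hxu rfl
  have hGood : ∀ p ∈ u, ∀ q ∈ u, ω p q ≤ r := humax.1
  -- not both p and p* in u
  have hnotboth : ∀ p, p ∈ u → P.star p ∈ u → False := by
    intro p hp hps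
    have h := hGood p hp (P.star p) hps
    rw [hstar p] at h
    exact absurd (lt_of_lt_of_le hr h) (lt_irrefl _)
  -- maximality: if u ∪ {p} is good then p ∈ u
  have hmax' : ∀ p, (∀ x ∈ insert p u, ∀ y ∈ insert p u, ω x y ≤ r) → p ∈ u := by
    intro p hgood
    exact (humax.2 hgood (Set.subset_insert p u)) (Set.mem_insert p u)
  -- if p ∉ u, some witness of badness exists
  have extract : ∀ p, p ∉ u → (∃ q ∈ u, r < ω p q) ∨ r < ω p p := by
    intro p hp
    by_contra h
    push_neg at h
    obtain ⟨h1, h2⟩ := h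
    apply hp
    apply hmax' p
    rintro x (rfl | hx) y (rfl | hy)
    · exact h2
    · exact h1 y hy
    · rw [hsymm]; exact h1 x hx
    · exact hGood x hx y hy
  -- if q ∈ u then not both ω q p > r and ω q p* > r
  have hfork : ∀ q ∈ u, ∀ p, r < ω q p → r < ω q (P.star p) → False := by
    intro q hq p h1 h2
    have h := hGood q hq q hq
    rw [hself q p] at h
    exact absurd (lt_of_lt_of_le (lt_min h1 h2) h) (lt_irrefl _)
  -- completeness
  have hatleast : ∀ p, p ∈ u ∨ P.star p ∈ u := by
    intro p
    by_contra hcon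
    push_neg at hcon
    obtain ⟨hp, hps⟩ := hcon
    rcases extract p hp with ⟨q, hq, hq2⟩ | hpp
    · rcases extract (P.star p) hps with ⟨q', hq', hq'2⟩ | hpsps
      · -- case 1 : ω p q > r, ω p* q' > r ⇒ ω q' q > r
        have t1 : min (ω q' (P.star p)) (ω p (P.star (P.star q)))
            ≤ ω q' (P.star (P.star q)) := htri q' p (P.star q)
        rw [P.star_star] at t1
        have hq'p : r < ω q' (P.star p) := by rw [hsymm]; exact hq'2
        have hpq : r < ω p q := hq2
        have : r < ω q' q := lt_of_lt_of_le (lt_min hq'p hpq) t1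
        exact absurd (hGood q' hq' q hq) (not_le.mpr this)
      · -- case 2 : ω p q > r, ω p* p* > r ⇒ ω q p* > r, fork at q
        have t1 : min (ω q (P.star (P.star p))) (ω (P.star p) (P.star p))
            ≤ ω q (P.star p) := htri q (P.star p) p
        rw [P.star_star] at t1
        have hqp : r < ω q p := by rw [hsymm]; exact hq2
        have h2 : r < ω q (P.star p) := lt_of_lt_of_le (lt_min hqp hpsps) t1
        exact hfork q hq p hqp h2
    · rcases extract (P.star p) hps with ⟨q, hq, hq2⟩ | hpsps
      · -- case 3 : ω p p > r, ω p* q > r ⇒ ω q p > r, fork at q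
        have hpp' : r < ω p (P.star (P.star p)) := by rw [P.star_star]; exact hpp
        have t1 : min (ω q (P.star p)) (ω p (P.star (P.star p)))
            ≤ ω q (P.star (P.star p)) := htri q p (P.star p)
        have hqps : r < ω q (P.star p) := by rw [hsymm]; exact hq2
        have h2 : r < ω q (P.star (P.star p)) :=
          lt_of_lt_of_le (lt_min hqps hpp') t1
        rw [P.star_star] at h2
        exact hfork q hq p h2 hqps
      · -- case 4 : contradicts hkey
        exact absurd (hkey p) (not_le.mpr (lt_min hpp hpsps))
  refine ⟨u, ⟨?_, h1u⟩, ?_⟩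
  · intro p
    rcases hatleast p with h | h
    · exact Or.inl ⟨h, fun hs => hnotboth p h hs⟩
    · exact Or.inr ⟨h, fun hs => hnotboth p hs h⟩
  · intro p q
    by_cases h : p ∈ u ∧ q ∈ u
    · rw [if_pos h]; exact hGood p h.1 q h.2
    · rw [if_neg h]; exact le_top
end

section
/- A symmetric matrix ω with entries in ℕ ∪ {∞} indexed by a finite PCS Σ is a 2-ranking if and only if there exists a ranking κ on the Hamming cube H with ω_{ab} = κ(⟨{a,b}⟩) for all a,b. Moreover, when ω is a 2-ranking, the function κ̂(u) := max_{a,b ∈ u} ω_{ab} (extended to sets by minimization) is the unique minimal ranking agreeing with ω: κ̂ agrees with ω, and κ̂ ≤ κ pointwise for every ranking κ agreeing with ω. -/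
universe u v

variable {α : Type*}

/-! An agreeing ranking `κ` yields the axioms of a 2-ranking because `⟨S⟩` splits as
`⟨S ∪ {x}⟩ ∪ ⟨S ∪ {x*}⟩` and `κ` turns unions into minima; e.g. the triangle inequality comes
from `⟨{a, c*}⟩ ⊆ ⟨{a, b*}⟩ ∪ ⟨{b, c*}⟩`.

Conversely, for a 2-ranking `ω` and `ω_{ab} < ∞`, take a maximal set `u ⊇ {a, b}` all of whose
entries `ω_{xy}` are at most `ω_{ab}`. By the triangle inequality, for every `c` either `c` or
`c*` can be added to such a set, so `u` is a complete `*`-selection, and it contains `1` since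
`ω_{0x} = ∞`. Hence `κ̂(⟨{a, b}⟩) ≤ ω_{ab}`; the other inequalities, including the minimality of
`κ̂`, amount to `ω_{xy} = κ(⟨{x, y}⟩) ≤ κ({u})` for `x, y ∈ u`. -/

section HalfCube

variable (P : PCS α)

lemma zero_notMem_of_mem_Hcube {u : Set α} (hu : u ∈ Hcube P) : P.zero ∉ u := fun h0 =>
  (hu.1 P.zero).elim (fun h => h.2 hu.2) (fun h => h.2 h0)

lemma halfCube_subset_Hcube (S : Set α) : halfCube P S ⊆ Hcube P := fun _ hu => hu.1

lemma halfCube_empty : halfCube P ∅ = Hcube P := by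
  ext u; simp [halfCube]

lemma halfCube_zero_pair (a : α) : halfCube P {P.zero, a} = ∅ :=
  Set.eq_empty_of_forall_notMem fun _ hu =>
    zero_notMem_of_mem_Hcube P hu.1 (hu.2 (Set.mem_insert _ _))

lemma halfCube_pair_star (a : α) : halfCube P {a, P.star a} = ∅ :=
  Set.eq_empty_of_forall_notMem fun _ hu =>
    (hu.1.1 a).elim (fun h => h.2 (hu.2 (by simp))) (fun h => h.2 (hu.2 (by simp)))

lemma halfCube_insert_union_insert_star (S : Set α) (x : α) :
    halfCube P (insert x S) ∪ halfCube P (insert (P.star x) S) = halfCube P S := by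
  refine Set.Subset.antisymm
    (Set.union_subset (fun u hu => ⟨hu.1, (Set.subset_insert _ _).trans hu.2⟩)
      (fun u hu => ⟨hu.1, (Set.subset_insert _ _).trans hu.2⟩)) fun u hu => ?_
  rcases hu.1.1 x with ⟨hx, -⟩ | ⟨hx, -⟩
  · exact Or.inl ⟨hu.1, Set.insert_subset hx hu.2⟩
  · exact Or.inr ⟨hu.1, Set.insert_subset hx hu.2⟩

end HalfCube

namespace IsRanking

variable {P : PCS α} {κ : Set (Set α) → ℕ∞} (hκ : IsRanking P κ)
include hκ

lemma apply_union {s t : Set (Set α)} (hs : s ⊆ Hcube P) (ht : t ⊆ Hcube P) :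
    κ (s ∪ t) = min (κ s) (κ t) := by
  rw [hκ.1 _ (Set.union_subset hs ht), hκ.1 _ hs, hκ.1 _ ht, iInf_union]

lemma le_of_subset {s t : Set (Set α)} (hst : s ⊆ t) (ht : t ⊆ Hcube P) : κ t ≤ κ s := by
  rw [hκ.1 _ ht, hκ.1 _ (hst.trans ht)]
  exact biInf_mono hst

lemma iInf_iSup_le {ω : α → α → ℕ∞} (hk : ∀ a b, κ (halfCube P {a, b}) = ω a b)
    {F : Set (Set α)} (hF : F ⊆ Hcube P) : (⨅ u ∈ F, ⨆ a ∈ u, ⨆ b ∈ u, ω a b) ≤ κ F := by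
  rw [hκ.1 F hF]
  refine iInf₂_mono fun u hu => iSup₂_le fun x hx => iSup₂_le fun y hy => ?_
  rw [← hk]
  refine hκ.le_of_subset (Set.singleton_subset_iff.2 ⟨hF hu, ?_⟩) (halfCube_subset_Hcube P _)
  exact Set.insert_subset hx (Set.singleton_subset_iff.2 hy)

lemma is2Ranking {ω : α → α → ℕ∞} (hsym : ∀ a b, ω a b = ω b a)
    (hk : ∀ a b, κ (halfCube P {a, b}) = ω a b) : Is2Ranking P ω := by
  have hH := halfCube_subset_Hcube P
  have hmin_eq (a : α) : min (ω a a) (ω (P.star a) (P.star a)) = κ (Hcube P) := by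
    rw [← hk, ← hk, Set.pair_eq_singleton, Set.pair_eq_singleton, ← hκ.apply_union (hH _) (hH _),
      ← halfCube_empty, ← halfCube_insert_union_insert_star P ∅ a]
    simp only [LawfulSingleton.insert_empty_eq]
  refine ⟨hsym, fun a => ?_, fun a => ?_, fun a b => by rw [hmin_eq, hmin_eq], fun a => ?_,
    fun a b => ?_, fun a b c => ?_⟩
  · rw [← hk, halfCube_zero_pair, hκ.2.2]
  · rw [← hk, halfCube_pair_star, hκ.2.2]
  · obtain ⟨u, hu, hu_lt⟩ := hκ.2.1
    exact hmin_eq a ▸ (hκ.le_of_subset (Set.singleton_subset_iff.2 hu) le_rfl).trans_lt hu_lt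
  · rw [← hk, ← hk, ← hk, Set.pair_eq_singleton, ← hκ.apply_union (hH _) (hH _), Set.pair_comm a b,
      Set.pair_comm a, halfCube_insert_union_insert_star]
  · rw [← hk, ← hk, ← hk, ← hκ.apply_union (hH _) (hH _)]
    refine hκ.le_of_subset (fun u hu => ?_) (Set.union_subset (hH _) (hH _))
    rcases hu.1.1 b with ⟨hb, -⟩ | ⟨hb, -⟩
    · exact Or.inr ⟨hu.1, Set.insert_subset hb (hu.2.trans' (by simp))⟩
    · exact Or.inl ⟨hu.1, Set.insert_subset (hu.2 (by simp)) (by simpa using hb)⟩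

end IsRanking

namespace Is2Ranking

variable {P : PCS α} {ω : α → α → ℕ∞} (hω : Is2Ranking P ω)
include hω

lemma diag_le (a b : α) : ω a a ≤ ω a b :=
  hω.2.2.2.2.2.1 a b ▸ min_le_left _ _

lemma forall_le_or_forall_star_le {T : Set α} {w : ℕ∞} (hT : ∀ x ∈ T, ∀ y ∈ T, ω x y ≤ w)
    (c : α) : (∀ x ∈ T, ω c x ≤ w) ∨ ∀ x ∈ T, ω (P.star c) x ≤ w := by
  by_contra! ⟨⟨x, hx, hxc⟩, ⟨y, hy, hyc⟩⟩
  have htri := hω.2.2.2.2.2.2 x (P.star c) (P.star y)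
  rw [P.star_star, P.star_star, hω.1 x c] at htri
  exact (lt_min hxc hyc).not_ge (htri.trans (hT x hx y hy))

lemma exists_completeSel_superset [Finite α] {S : Set α} (hS : S.Nonempty) {w : ℕ∞}
    (hw : w < ⊤) (hSw : ∀ x ∈ S, ∀ y ∈ S, ω x y ≤ w) :
    ∃ u, S ⊆ u ∧ CompleteSel P u ∧ ∀ x ∈ u, ∀ y ∈ u, ω x y ≤ w := by
  obtain ⟨u, hSu, hu⟩ := Finite.exists_le_maximal (p := fun T => ∀ x ∈ T, ∀ y ∈ T, ω x y ≤ w) hSw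
  obtain ⟨x₀, hx₀⟩ := hS.mono hSu
  have mem_of_forall_le {c : α} (hc : ∀ x ∈ u, ω c x ≤ w) : c ∈ u := by
    refine hu.mem_of_prop_insert ?_
    simp only [Set.mem_insert_iff, forall_eq_or_imp]
    exact ⟨⟨(hω.diag_le c x₀).trans (hc x₀ hx₀), hc⟩,
      fun x hx => ⟨hω.1 x c ▸ hc x hx, hu.1 x hx⟩⟩
  refine ⟨u, hSu, fun c => ?_, hu.1⟩
  have not_both : ¬ (c ∈ u ∧ P.star c ∈ u) := fun ⟨hc, hc'⟩ =>
    (hu.1 c hc _ hc').not_gt (hω.2.2.1 c ▸ hw)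
  rcases hω.forall_le_or_forall_star_le hu.1 c with hc | hc
  · exact Or.inl ⟨mem_of_forall_le hc, fun h => not_both ⟨mem_of_forall_le hc, h⟩⟩
  · exact Or.inr ⟨mem_of_forall_le hc, fun h => not_both ⟨h, mem_of_forall_le hc⟩⟩

lemma exists_mem_Hcube [Finite α] {a b : α} (hab : ω a b < ⊤) :
    ∃ u ∈ Hcube P, a ∈ u ∧ b ∈ u ∧ ∀ x ∈ u, ∀ y ∈ u, ω x y ≤ ω a b := by
  have hpair : ∀ x ∈ ({a, b} : Set α), ∀ y ∈ ({a, b} : Set α), ω x y ≤ ω a b := by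
    simp only [Set.mem_insert_iff, Set.mem_singleton_iff, forall_eq_or_imp, forall_eq]
    exact ⟨⟨hω.diag_le a b, le_rfl⟩, (hω.1 b a).le, hω.1 b a ▸ hω.diag_le b a⟩
  obtain ⟨u, hSu, hu, hbound⟩ := hω.exists_completeSel_superset ⟨a, by simp⟩ hab hpair
  have hzero : P.zero ∉ u := fun h => (hbound _ h _ h).not_gt (hω.2.1 P.zero ▸ hab)
  exact ⟨u, ⟨hu, (hu P.zero).elim (fun h => absurd h.1 hzero) And.left⟩, hSu (by simp),
    hSu (by simp), hbound⟩

lemma iInf_halfCube_pair [Finite α] (a b : α) :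
    (⨅ u ∈ halfCube P {a, b}, ⨆ x ∈ u, ⨆ y ∈ u, ω x y) = ω a b := by
  refine le_antisymm ?_ (le_iInf₂ fun u hu => le_iSup₂_of_le a (hu.2 (by simp))
    (le_iSup₂_of_le b (hu.2 (by simp)) le_rfl))
  obtain hab | hab := lt_or_eq_of_le (le_top : ω a b ≤ ⊤)
  · obtain ⟨u, hu, ha, hb, hbound⟩ := hω.exists_mem_Hcube hab
    exact iInf₂_le_of_le u ⟨hu, Set.insert_subset ha (Set.singleton_subset_iff.2 hb)⟩
      (iSup₂_le fun x hx => iSup₂_le fun y hy => hbound x hx y hy)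
  · exact hab ▸ le_top

lemma isRanking_iInf_iSup [Finite α] :
    IsRanking P (fun F => ⨅ u ∈ F, ⨆ a ∈ u, ⨆ b ∈ u, ω a b) := by
  refine ⟨fun F _ => by simp, ?_, by simp⟩
  have hone : ω (P.star P.zero) (P.star P.zero) < ⊤ := by
    simpa [hω.2.1 P.zero] using hω.2.2.2.2.1 P.zero
  obtain ⟨u, hu, -, -, hbound⟩ := hω.exists_mem_Hcube hone
  refine ⟨u, hu, ?_⟩
  simpa using (iSup₂_le fun x hx => iSup₂_le fun y hy => hbound x hx y hy).trans_lt hone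

end Is2Ranking

/-- A symmetric matrix is a 2-ranking iff it agrees with some ranking; moreover the
completion `κ̂(u) = max_{a,b ∈ u} ω_{ab}` (extended by minimization) is the minimal
ranking agreeing with it. -/
theorem stmt15 [Finite α] (P : PCS α) (ω : α → α → ℕ∞)
    (hsym : ∀ a b, ω a b = ω b a) :
    (Is2Ranking P ω ↔
      ∃ κ : Set (Set α) → ℕ∞, IsRanking P κ ∧ ∀ a b, κ (halfCube P {a, b}) = ω a b) ∧
    (Is2Ranking P ω →
      (IsRanking P (fun F => ⨅ u ∈ F, ⨆ a ∈ u, ⨆ b ∈ u, ω a b) ∧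
       (∀ a b, (⨅ u ∈ halfCube P {a, b}, ⨆ x ∈ u, ⨆ y ∈ u, ω x y) = ω a b) ∧
       ∀ κ : Set (Set α) → ℕ∞, IsRanking P κ →
         (∀ a b, κ (halfCube P {a, b}) = ω a b) →
         ∀ F, F ⊆ Hcube P → (⨅ u ∈ F, ⨆ a ∈ u, ⨆ b ∈ u, ω a b) ≤ κ F)) :=
  ⟨⟨fun hω => ⟨_, hω.isRanking_iInf_iSup, hω.iInf_halfCube_pair⟩,
      fun ⟨_, hκ, hk⟩ => hκ.is2Ranking hsym hk⟩,
    fun hω => ⟨hω.isRanking_iInf_iSup, hω.iInf_halfCube_pair,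
      fun _ hκ hk _ hF => hκ.iInf_iSup_le hk hF⟩⟩
end

section
/- Let ω be a 2-ranking on a finite PCS Σ, δ, ε ≥ 0 integers, G = D(ω;δ) the derived PCR defined by (a,b) ∈ G iff {a,a*} ∩ {b,b*} = ∅ and (ω_{ab*} = ∞ or ω_{ab*} > δ + max(ω_{ab}, ω_{a*b*})), and M(ω;ε) = {a ∈ Σ : ω_{aa} < ω_{a*a*} − ε}. Then M(ω;ε) is G-coherent and forward-closed with respect to G, and consequently ⟨M(ω;ε);G⟩ is nonempty. -/
universe u v

variable {α : Type*}

/-!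
An edge `(a, b)` of `D(ω;δ)` forces `ω_{ab} ≤ ω_{ab*}` and `ω_{a*b*} ≤ ω_{ab*}`. Together with
symmetry and `ω_{aa} = min(ω_{ab}, ω_{ab*})` this gives `ω_{bb} ≤ ω_{aa}` and `ω_{a*a*} ≤ ω_{b*b*}`,
so the inequality `ω_{xx} < ω_{x*x*} - ε` defining `M(ω;ε)` propagates along edges. A forward-closed
set that never contains both `x` and `x*` is coherent, and Zorn's lemma extends every coherent set
to a maximal one.
-/

section Coherence

variable {P : PCS α} {G : Set (α × α)} {S : Set α}

theorem upClosure_eq_self_of_forall_mem (h : ∀ a b, a ∈ S → (a, b) ∈ G → b ∈ S) :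
    upClosure G S = S := by
  refine Set.Subset.antisymm ?_ fun a ha => ⟨a, ha, .refl⟩
  rintro b ⟨a, ha, hab⟩
  induction hab with
  | refl => exact ha
  | tail _ hbc ih => exact h _ _ ih hbc

theorem coherent_of_upClosure_eq_self (hS : upClosure G S = S)
    (hstar : ∀ x ∈ S, P.star x ∉ S) : Coherent P G S :=
  fun a ha b hb hab => hstar b hb (hS ▸ ⟨a, ha, hab⟩)

theorem halfspace_nonempty_of_coherent (hS : Coherent P G S) : (halfspace P G S).Nonempty := by
  have hchain : ∀ c ⊆ {T | Coherent P G T}, IsChain (· ⊆ ·) c → c.Nonempty →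
      ∃ ub ∈ {T | Coherent P G T}, ∀ s ∈ c, s ⊆ ub := by
    intro c hc hchain _
    refine ⟨⋃₀ c, ?_, fun s hs => Set.subset_sUnion_of_mem hs⟩
    rintro a ⟨s, hs, has⟩ b ⟨t, ht, hbt⟩
    rcases hchain.total hs ht with hst | hts
    · exact hc ht a (hst has) b hbt
    · exact hc hs a has b (hts hbt)
  obtain ⟨u, hSu, hu⟩ := zorn_subset_nonempty {T | Coherent P G T} hchain S hS
  exact ⟨u, ⟨hu.prop, fun T hT huT => (hu.eq_of_ge hT huT).symm⟩, hSu⟩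

end Coherence

section Diagonal

variable {β : Type*} [LinearOrder β] {P : PCS α} {ω : α → α → β}
  (hsym : ∀ a b, ω a b = ω b a) (hsplit : ∀ a b, ω a a = min (ω a b) (ω a (P.star b)))
include hsym hsplit

theorem diag_le_diag_of_le_star {a b : α} (h : ω a b ≤ ω a (P.star b)) : ω b b ≤ ω a a :=
  calc ω b b ≤ ω b a := (hsplit b a).trans_le (min_le_left _ _)
    _ = ω a b := hsym b a
    _ = ω a a := ((hsplit a b).trans (min_eq_left h)).symm

theorem star_diag_le_star_diag_of_le {a b : α} (h : ω (P.star a) (P.star b) ≤ ω a (P.star b)) :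
    ω (P.star a) (P.star a) ≤ ω (P.star b) (P.star b) := by
  have ha : ω (P.star a) (P.star a) ≤ ω (P.star a) (P.star b) :=
    (hsplit _ b).trans_le (min_le_right _ _)
  rw [hsplit (P.star b) a, hsym (P.star b) a, hsym (P.star b) (P.star a)]
  exact le_min (ha.trans h) ha

end Diagonal

/-- The derived PCR `D(ω;δ)`. -/
def derivedPCR (P : PCS α) (ω : α → α → ℕ∞) (δ : ℕ) : Set (α × α) :=
  {p | ({p.1, P.star p.1} : Set α) ∩ {p.2, P.star p.2} = ∅ ∧
    (ω p.1 (P.star p.2) = ⊤ ∨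
      (δ : ℕ∞) + max (ω p.1 p.2) (ω (P.star p.1) (P.star p.2)) < ω p.1 (P.star p.2))}

/-- The minset `M(ω;ε)`. -/
def minSet (P : PCS α) (ω : α → α → ℕ∞) (ε : ℕ) : Set α :=
  {x | ω x x < ω (P.star x) (P.star x) - (ε : ℕ∞)}

section Minset

variable {P : PCS α} {ω : α → α → ℕ∞}

theorem max_le_of_mem_derivedPCR {δ : ℕ} {a b : α} (hab : (a, b) ∈ derivedPCR P ω δ) :
    max (ω a b) (ω (P.star a) (P.star b)) ≤ ω a (P.star b) := by
  rcases hab.2 with htop | hlt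
  · exact htop ▸ le_top
  · exact le_add_self.trans hlt.le

theorem star_not_mem_minSet {ε : ℕ} {x : α} (hx : x ∈ minSet P ω ε) :
    P.star x ∉ minSet P ω ε := by
  intro hx'
  simp only [minSet, Set.mem_ofPred_eq, P.star_star] at hx hx'
  exact (hx.trans_le tsub_le_self).not_gt (hx'.trans_le tsub_le_self)

theorem mem_minSet_of_mem_derivedPCR (hsym : ∀ a b, ω a b = ω b a)
    (hsplit : ∀ a b, ω a a = min (ω a b) (ω a (P.star b))) {δ ε : ℕ} {a b : α}
    (ha : a ∈ minSet P ω ε) (hab : (a, b) ∈ derivedPCR P ω δ) : b ∈ minSet P ω ε := by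
  have hmax := max_le_of_mem_derivedPCR hab
  calc ω b b ≤ ω a a := diag_le_diag_of_le_star hsym hsplit (le_of_max_le_left hmax)
    _ < ω (P.star a) (P.star a) - ε := ha
    _ ≤ ω (P.star b) (P.star b) - ε :=
      tsub_le_tsub_right (star_diag_le_star_diag_of_le hsym hsplit (le_of_max_le_right hmax)) _

end Minset

theorem stmt16_general (P : PCS α) (ω : α → α → ℕ∞) (hω : Is2Ranking P ω)
    (δ ε : ℕ) (Gd : Set (α × α))
    (hGd : ∀ a b, (a, b) ∈ Gd ↔
      (({a, P.star a} : Set α) ∩ {b, P.star b} = ∅) ∧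
      (ω a (P.star b) = ⊤ ∨
        (δ : ℕ∞) + max (ω a b) (ω (P.star a) (P.star b)) < ω a (P.star b))) :
    Coherent P Gd {x | ω x x < ω (P.star x) (P.star x) - (ε : ℕ∞)} ∧
    upClosure Gd {x | ω x x < ω (P.star x) (P.star x) - (ε : ℕ∞)}
      = {x | ω x x < ω (P.star x) (P.star x) - (ε : ℕ∞)} ∧
    (halfspace P Gd {x | ω x x < ω (P.star x) (P.star x) - (ε : ℕ∞)}).Nonempty := by
  obtain ⟨hsym, -, -, -, -, hsplit, -⟩ := hω
  obtain rfl : Gd = derivedPCR P ω δ := Set.ext fun p => hGd p.1 p.2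
  have hclosed : upClosure (derivedPCR P ω δ) (minSet P ω ε) = minSet P ω ε :=
    upClosure_eq_self_of_forall_mem fun _ _ => mem_minSet_of_mem_derivedPCR hsym hsplit
  have hcoh : Coherent P (derivedPCR P ω δ) (minSet P ω ε) :=
    coherent_of_upClosure_eq_self hclosed fun _ => star_not_mem_minSet
  exact ⟨hcoh, hclosed, halfspace_nonempty_of_coherent hcoh⟩

/-- The minset `M(ω;ε)` is coherent and forward-closed for the derived PCR `D(ω;δ)`,
so its half-space is nonempty. -/
theorem stmt16 [Finite α] (P : PCS α) (ω : α → α → ℕ∞) (hω : Is2Ranking P ω)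
    (δ ε : ℕ) (Gd : Set (α × α))
    (hGd : ∀ a b, (a, b) ∈ Gd ↔
      (({a, P.star a} : Set α) ∩ {b, P.star b} = ∅) ∧
      (ω a (P.star b) = ⊤ ∨
        (δ : ℕ∞) + max (ω a b) (ω (P.star a) (P.star b)) < ω a (P.star b))) :
    Coherent P Gd {x | ω x x < ω (P.star x) (P.star x) - (ε : ℕ∞)} ∧
    upClosure Gd {x | ω x x < ω (P.star x) (P.star x) - (ε : ℕ∞)}
      = {x | ω x x < ω (P.star x) (P.star x) - (ε : ℕ∞)} ∧
    (halfspace P Gd {x | ω x x < ω (P.star x) (P.star x) - (ε : ℕ∞)}).Nonempty :=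
  stmt16_general P ω hω δ ε Gd hGd
end

section
/- Let κ be a ranking on the Hamming cube H over a finite PCS Σ, G = D(κ;0) its derived PCR (via the 2-restriction of κ), F the set of global minimum points of κ, F̂ the set of global minimum points of the 2-closure κ̂ (completion of the 2-restriction), and M = {a ∈ Σ : κ(⟨a⟩) < κ(⟨a*⟩)}. Then F ⊆ F̂ ⊆ G°, F̂ = ⟨M;G⟩ = {u ∈ G° : M ⊆ u}, and F̂ is the convex hull of F in the dual median graph of G. -/
universe u v

variable {α : Type*}

/-- The completion value `κ̂(u) = max_{a,b ∈ u} ω_{ab}`. -/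
noncomputable def hatVal (ω : α → α → ℕ∞) (u : Set α) : ℕ∞ :=
  ⨆ a ∈ u, ⨆ b ∈ u, ω a b

/-- Global minima: `F ⊆ F̂ ⊆ G°`, `F̂ = ⟨M;G⟩`, and `F̂` is the convex hull of `F`. -/
theorem stmt17 [Finite α] (P : PCS α) (κ : Set (Set α) → ℕ∞) (hκ : IsRanking P κ)
    (ω : α → α → ℕ∞) (hωdef : ∀ a b, ω a b = κ (halfCube P {a, b}))
    (Gd : Set (α × α))
    (hGd : ∀ a b, (a, b) ∈ Gd ↔
      (({a, P.star a} : Set α) ∩ {b, P.star b} = ∅) ∧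
      (ω a (P.star b) = ⊤ ∨
        max (ω a b) (ω (P.star a) (P.star b)) < ω a (P.star b)))
    (F Fhat : Set (Set α)) (M : Set α)
    (hF : F = {u | u ∈ Hcube P ∧ ∀ v ∈ Hcube P, κ {u} ≤ κ {v}})
    (hFhat : Fhat = {u | u ∈ Hcube P ∧ ∀ v ∈ Hcube P, hatVal ω u ≤ hatVal ω v})
    (hM : M = {x | κ (halfCube P {x}) < κ (halfCube P {P.star x})}) :
    F ⊆ Fhat ∧ (∀ u ∈ Fhat, MaxCoherent P Gd u) ∧
    Fhat = halfspace P Gd M ∧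
    Fhat = halfspace P Gd {x | ∀ u ∈ F, x ∈ u} := by
  obtain ⟨hκ1, hκ2, hκ3⟩ := hκ
  set m := ⨅ u ∈ Hcube P, κ {u} with hm
  have hinj : ∀ x y : α, P.star x = P.star y → x = y := fun x y h => by
    rw [← P.star_star x, h, P.star_star]
  have hhc : ∀ S : Set α, halfCube P S ⊆ Hcube P := fun S u hu => hu.1
  have hωm : ∀ a b, m ≤ ω a b := by
    intro a b
    rw [hωdef, hκ1 _ (hhc _)]
    exact biInf_mono (hhc _)
  have hmlt : m < ⊤ := by
    obtain ⟨u, hu, hlt⟩ := hκ2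
    exact lt_of_le_of_lt (biInf_le (fun u => κ {u}) hu) hlt
  have hHfin : (Hcube P).Finite := Set.toFinite _
  have hHne : (Hcube P).Nonempty := by obtain ⟨u, hu, -⟩ := hκ2; exact ⟨u, hu⟩
  obtain ⟨u0, hu0H, hu0m⟩ : ∃ u0 ∈ Hcube P, κ {u0} = m := by
    have h1 := (hHne.image (fun u => κ {u})).csInf_mem (hHfin.image _)
    rw [sInf_image] at h1
    obtain ⟨u0, hu0, heq⟩ := h1
    exact ⟨u0, hu0, heq⟩
  -- complete selection helpers
  have hone : ∀ u ∈ Hcube P, ∀ a : α, a ∈ u ∨ P.star a ∈ u := by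
    intro u hu a
    rcases hu.1 a with ⟨h, -⟩ | ⟨h, -⟩
    · exact Or.inl h
    · exact Or.inr h
  have hnb : ∀ u ∈ Hcube P, ∀ a : α, a ∈ u → P.star a ∉ u := by
    intro u hu a ha hsa
    rcases hu.1 a with ⟨-, h⟩ | ⟨-, h⟩
    · exact h hsa
    · exact h ha
  have hωsymm : ∀ a b, ω a b = ω b a := by
    intro a b; rw [hωdef, hωdef, Set.pair_comm]
  have hωaa : ∀ a, ω a a = κ (halfCube P {a}) := by
    intro a; rw [hωdef, Set.pair_eq_singleton]
  have hωle : ∀ u ∈ Hcube P, ∀ a ∈ u, ∀ b ∈ u, ω a b ≤ κ {u} := by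
    intro u hu a ha b hb
    rw [hωdef, hκ1 _ (hhc _)]
    exact biInf_le (fun u => κ {u})
      ⟨hu, by rw [Set.insert_subset_iff, Set.singleton_subset_iff]; exact ⟨ha, hb⟩⟩
  have hsplit : ∀ a b, ω a a = min (ω a b) (ω a (P.star b)) := by
    intro a b
    have hU : halfCube P {a} = halfCube P {a, b} ∪ halfCube P {a, P.star b} := by
      ext u
      simp only [halfCube, Set.mem_setOf_eq, Set.mem_union, Set.singleton_subset_iff,
        Set.insert_subset_iff]
      constructor
      · rintro ⟨huH, hau⟩
        rcases hone u huH b with hb | hb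
        · exact Or.inl ⟨huH, hau, hb⟩
        · exact Or.inr ⟨huH, hau, hb⟩
      · rintro (⟨h1, h2, -⟩ | ⟨h1, h2, -⟩) <;> exact ⟨h1, h2⟩
    rw [hωaa, hωdef, hωdef, hU, hκ1 _ (Set.union_subset (hhc _) (hhc _)),
      hκ1 _ (hhc _), hκ1 _ (hhc _), iInf_union]
  have hmm : ∀ a, min (ω a a) (ω (P.star a) (P.star a)) = m := by
    intro a
    have hU : halfCube P {a} ∪ halfCube P {P.star a} = Hcube P := by
      ext u
      simp only [halfCube, Set.mem_setOf_eq, Set.mem_union, Set.singleton_subset_iff]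
      constructor
      · rintro (⟨h1, -⟩ | ⟨h1, -⟩) <;> exact h1
      · intro hu
        rcases hone u hu a with h | h
        · exact Or.inl ⟨hu, h⟩
        · exact Or.inr ⟨hu, h⟩
    rw [hωaa, hωaa, hκ1 _ (hhc _), hκ1 _ (hhc _), hm, ← hU, iInf_union]
  have hhatge : ∀ v ∈ Hcube P, m ≤ hatVal ω v := by
    intro v hv
    have hz : P.star P.zero ∈ v := hv.2
    calc m ≤ ω (P.star P.zero) (P.star P.zero) := hωm _ _
      _ ≤ ⨆ b ∈ v, ω (P.star P.zero) b := le_biSup _ hz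
      _ ≤ hatVal ω v := le_biSup (fun a => ⨆ b ∈ v, ω a b) hz
  have hhatle : ∀ u ∈ Hcube P, hatVal ω u ≤ κ {u} := by
    intro u hu
    exact iSup₂_le fun a ha => iSup₂_le fun b hb => hωle u hu a ha b hb
  have hFhatChar : ∀ u, u ∈ Fhat ↔ (u ∈ Hcube P ∧ ∀ a ∈ u, ∀ b ∈ u, ω a b = m) := by
    intro u
    rw [hFhat]; simp only [Set.mem_setOf_eq]
    constructor
    · rintro ⟨huH, hmin⟩
      refine ⟨huH, fun a ha b hb => le_antisymm ?_ (hωm a b)⟩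
      calc ω a b ≤ ⨆ b ∈ u, ω a b := le_biSup _ hb
        _ ≤ hatVal ω u := le_biSup (fun a => ⨆ b ∈ u, ω a b) ha
        _ ≤ hatVal ω u0 := hmin u0 hu0H
        _ ≤ κ {u0} := hhatle u0 hu0H
        _ = m := hu0m
    · rintro ⟨huH, hval⟩
      refine ⟨huH, fun v hv => le_trans ?_ (hhatge v hv)⟩
      exact iSup₂_le fun a ha => iSup₂_le fun b hb => (hval a ha b hb).le
  -- duality of Gd
  have hGdDual : ∀ a b : α, (a, b) ∈ Gd → (P.star b, P.star a) ∈ Gd := by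
    intro a b h
    rw [hGd] at h ⊢
    obtain ⟨hset, hcond⟩ := h
    constructor
    · rw [Set.eq_empty_iff_forall_notMem] at hset ⊢
      rintro y ⟨hy1, hy2⟩
      simp only [Set.mem_insert_iff, Set.mem_singleton_iff, P.star_star] at hy1 hy2
      apply hset (P.star y)
      constructor
      · rcases hy2 with rfl | rfl
        · simp [P.star_star]
        · simp
      · rcases hy1 with rfl | rfl
        · simp [P.star_star]
        · simp
    · rw [P.star_star, P.star_star, hωsymm (P.star b) a, hωsymm (P.star b) (P.star a),
        hωsymm b a, max_comm]
      exact hcond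
  have hLeDual : ∀ a b : α, pcrLe Gd a b → pcrLe Gd (P.star b) (P.star a) := by
    intro a b h
    induction h with
    | refl => exact Relation.ReflTransGen.refl
    | tail _ hedge ih => exact Relation.ReflTransGen.head (hGdDual _ _ hedge) ih
  -- step/closure lemmas for minimal-value cubes
  have hstep : ∀ u ∈ Hcube P, (∀ a ∈ u, ∀ b ∈ u, ω a b = m) →
      ∀ c d : α, (c, d) ∈ Gd → c ∈ u → d ∈ u := by
    intro u huH hval c d hcd hc
    rcases hone u huH d with hd | hd
    · exact hd
    · exfalso
      have hcd' : ω c (P.star d) = m := hval c hc (P.star d) hd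
      rw [hGd] at hcd
      rcases hcd.2 with h | h
      · rw [hcd'] at h; exact hmlt.ne h
      · rw [hcd'] at h
        exact absurd (le_trans (hωm c d) (le_max_left _ _)) (not_le.mpr h)
  have hclos : ∀ u ∈ Hcube P, (∀ a ∈ u, ∀ b ∈ u, ω a b = m) →
      ∀ c e : α, pcrLe Gd c e → c ∈ u → e ∈ u := by
    intro u huH hval c e h hc
    induction h with
    | refl => exact hc
    | tail _ hedge ih => exact hstep u huH hval _ _ hedge ih
  have hu0val : ∀ a ∈ u0, ∀ b ∈ u0, ω a b = m := by
    intro a ha b hb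
    exact le_antisymm (hu0m ▸ hωle u0 hu0H a ha b hb) (hωm a b)
  have hNondeg : ∀ a : α, ¬ (pcrLe Gd a (P.star a) ∧ pcrLe Gd (P.star a) a) := by
    rintro a ⟨h1, h2⟩
    rcases hone u0 hu0H a with h | h
    · exact hnb u0 hu0H a h (hclos u0 hu0H hu0val a (P.star a) h1 h)
    · exact hnb u0 hu0H a (hclos u0 hu0H hu0val (P.star a) a h2 h) h
  -- every Fhat member is max coherent
  have hFhatMC : ∀ u ∈ Fhat, MaxCoherent P Gd u := by
    intro u hu
    obtain ⟨huH, hval⟩ := (hFhatChar u).1 hu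
    constructor
    · intro a ha b hb hle
      exact hnb u huH b hb (hclos u huH hval a (P.star b) hle ha)
    · intro T hT hsub
      refine Set.Subset.antisymm hsub fun x hx => ?_
      by_contra hxu
      rcases hone u huH x with h | h
      · exact hxu h
      · have hrefl : pcrLe Gd x (P.star (P.star x)) := by
          rw [P.star_star]
          exact Relation.ReflTransGen.refl
        exact hT x hx (P.star x) (hsub h) hrefl
  have hMsub : ∀ u ∈ Fhat, M ⊆ u := by
    intro u hu x hx
    obtain ⟨huH, hval⟩ := (hFhatChar u).1 hu
    rw [hM] at hx
    simp only [Set.mem_setOf_eq] at hx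
    by_contra hxu
    rcases hone u huH x with h | h
    · exact hxu h
    · have h1 : κ (halfCube P {P.star x}) = m := by
        rw [← hωaa]; exact hval _ h _ h
      have h2 : m ≤ κ (halfCube P {x}) := by
        rw [← hωaa]; exact hωm x x
      rw [h1] at hx
      exact absurd hx (not_lt.mpr h2)
  -- the reverse direction
  have hRev : ∀ u : Set α, MaxCoherent P Gd u → M ⊆ u → u ∈ Fhat := by
    rintro u ⟨hcoh, hmax⟩ hMu
    have hnb' : ∀ x, x ∈ u → P.star x ∉ u := by
      intro x hx hxs
      have hrefl : pcrLe Gd x (P.star (P.star x)) := by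
        rw [P.star_star]; exact Relation.ReflTransGen.refl
      exact hcoh x hx (P.star x) hxs hrefl
    have hone' : ∀ x, x ∈ u ∨ P.star x ∈ u := by
      intro x
      by_contra hc
      push_neg at hc
      obtain ⟨hx, hxs⟩ := hc
      have key : ∀ y, y ∉ u →
          pcrLe Gd y (P.star y) ∨ ∃ z ∈ u, pcrLe Gd y (P.star z) := by
        intro y hy
        have hnc : ¬ Coherent P Gd (insert y u) := by
          intro hco
          exact hy (by rw [hmax _ hco (Set.subset_insert _ _)]; exact Set.mem_insert _ _)
        unfold Coherent at hnc
        push_neg at hnc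
        obtain ⟨p, hp, q, hq, hpq⟩ := hnc
        rcases Set.mem_insert_iff.1 hp with rfl | hp' <;>
          rcases Set.mem_insert_iff.1 hq with h | hq'
        · rw [h] at hpq; exact Or.inl hpq
        · exact Or.inr ⟨q, hq', hpq⟩
        · subst h
          have hd := hLeDual _ _ hpq
          rw [P.star_star] at hd
          exact Or.inr ⟨p, hp', hd⟩
        · exact absurd hpq (hcoh p hp' q hq')
      have h1 := key x hx
      have h2 := key (P.star x) hxs
      rw [P.star_star] at h2
      rcases h1 with h1 | ⟨y, hy, h1⟩ <;> rcases h2 with h2 | ⟨z, hz, h2⟩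
      · exact hNondeg x ⟨h1, h2⟩
      · have hd := hLeDual _ _ h2
        rw [P.star_star, P.star_star] at hd
        exact hcoh z hz z hz (hd.trans (h1.trans (hLeDual _ _ hd)))
      · have h3 : pcrLe Gd (P.star x) (P.star y) := h2.trans h1
        have hd := hLeDual _ _ h3
        rw [P.star_star, P.star_star] at hd
        exact hcoh y hy y hy (hd.trans h1)
      · have hd := hLeDual _ _ h2
        rw [P.star_star, P.star_star] at hd
        exact hcoh z hz y hy (hd.trans h1)
    have hcs : CompleteSel P u := by
      intro x
      rcases hone' x with h | h
      · exact Or.inl ⟨h, hnb' x h⟩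
      · exact Or.inr ⟨h, fun hx => hnb' x hx h⟩
    have h0M : P.star P.zero ∈ M := by
      rw [hM]
      simp only [Set.mem_setOf_eq, P.star_star]
      have he : halfCube P {P.zero} = ∅ := by
        rw [Set.eq_empty_iff_forall_notMem]
        rintro v ⟨hvH, hv0⟩
        exact hnb v hvH P.zero (Set.singleton_subset_iff.1 hv0) hvH.2
      have hHeq : halfCube P {P.star P.zero} = Hcube P := by
        ext v
        simp only [halfCube, Set.mem_setOf_eq, Set.singleton_subset_iff]
        exact ⟨fun h => h.1, fun h => ⟨h, h.2⟩⟩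
      rw [he, hHeq, hκ3, hκ1 _ (subset_refl _)]
      exact hmlt
    have h0u : P.star P.zero ∈ u := hMu h0M
    have huH : u ∈ Hcube P := ⟨hcs, h0u⟩
    have hMstar : ∀ c ∈ u, ¬ (m < ω c c) := by
      intro c hc hcc
      have hb : ω (P.star c) (P.star c) ≤ m := by
        by_contra hb
        push_neg at hb
        exact absurd (hmm c) (ne_of_gt (lt_min hcc hb))
      have hcM : P.star c ∈ M := by
        rw [hM]
        simp only [Set.mem_setOf_eq, P.star_star]
        rw [← hωaa, ← hωaa]
        exact lt_of_le_of_lt hb hcc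
      exact hnb' c hc (hMu hcM)
    have hval : ∀ a ∈ u, ∀ b ∈ u, ω a b = m := by
      intro a ha b hb
      refine le_antisymm ?_ (hωm a b)
      by_contra hgt'
      have hgt : m < ω a b := not_le.1 hgt'
      have h1 : ω a (P.star b) = m := by
        refine le_antisymm ?_ (hωm _ _)
        by_contra h'
        have h'' : m < ω a (P.star b) := not_le.1 h'
        exact hMstar a ha (by rw [hsplit a b]; exact lt_min hgt h'')
      have h2 : ω (P.star a) b = m := by
        have hba : m < ω b a := by rw [hωsymm]; exact hgt
        refine le_antisymm ?_ (hωm _ _)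
        by_contra h'
        have h'' : m < ω b (P.star a) := by rw [hωsymm]; exact not_le.1 h'
        exact hMstar b hb (by rw [hsplit b a]; exact lt_min hba h'')
      have hne1 : a ≠ P.star b := fun h => hnb' b hb (h ▸ ha)
      have hne2 : a ≠ b := by
        rintro rfl
        exact hMstar a ha hgt
      have hGdab : (a, P.star b) ∈ Gd := by
        rw [hGd]
        constructor
        · rw [Set.eq_empty_iff_forall_notMem]
          rintro y ⟨hy1, hy2⟩
          simp only [Set.mem_insert_iff, Set.mem_singleton_iff, P.star_star] at hy1 hy2
          rcases hy1 with rfl | rfl <;> rcases hy2 with h | h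
          · exact hne1 h
          · exact hne2 h
          · exact hne2 (hinj _ _ h)
          · exact hne1 (by rw [← h, P.star_star])
        · right
          rw [P.star_star, h1, h2, max_self]
          exact hgt
      exact hcoh a ha b hb (Relation.ReflTransGen.single hGdab)
    exact (hFhatChar u).2 ⟨huH, hval⟩
  -- F ⊆ Fhat
  have hFsub : F ⊆ Fhat := by
    intro u hu
    rw [hF] at hu
    obtain ⟨huH, hmin⟩ := hu
    have hum : κ {u} = m :=
      le_antisymm (hu0m ▸ hmin u0 hu0H) (biInf_le (fun u => κ {u}) huH)
    exact (hFhatChar u).2 ⟨huH, fun a ha b hb =>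
      le_antisymm (hum ▸ hωle u huH a ha b hb) (hωm a b)⟩
  refine ⟨hFsub, hFhatMC, ?_, ?_⟩
  · ext u
    constructor
    · intro hu
      exact ⟨hFhatMC u hu, hMsub u hu⟩
    · rintro ⟨hmc, hMu⟩
      exact hRev u hmc hMu
  · have hMM : M ⊆ {x | ∀ u ∈ F, x ∈ u} := fun x hx v hv => hMsub v (hFsub hv) hx
    ext u
    constructor
    · intro hu
      obtain ⟨huH, hval⟩ := (hFhatChar u).1 hu
      refine ⟨hFhatMC u hu, fun x hx => ?_⟩
      by_contra hxu
      rcases hone u huH x with h | h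
      · exact hxu h
      · have h1 : κ (halfCube P {P.star x}) = m := by
          rw [← hωaa]; exact hval _ h _ h
        have hnem : (halfCube P {P.star x}).Nonempty := by
          rw [Set.nonempty_iff_ne_empty]
          intro he
          rw [he, hκ3] at h1
          exact hmlt.ne h1.symm
        obtain ⟨w, hw, hwm⟩ : ∃ w ∈ halfCube P {P.star x}, κ {w} = m := by
          have hmem := (hnem.image (fun u => κ {u})).csInf_mem (Set.toFinite _)
          rw [sInf_image] at hmem
          rw [hκ1 _ (hhc _)] at h1
          rw [h1] at hmem
          obtain ⟨w, hw, heq⟩ := hmem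
          exact ⟨w, hw, heq⟩
        have hwF : w ∈ F := by
          rw [hF]
          exact ⟨hhc _ hw, fun v hv => hwm ▸ biInf_le (fun u => κ {u}) hv⟩
        have hxw : x ∈ w := hx w hwF
        exact hnb w (hhc _ hw) x hxw (Set.singleton_subset_iff.1 hw.2)
    · rintro ⟨hmc, hsub⟩
      exact hRev u hmc fun x hx => hsub (hMM hx)
end

section
/- Let ω be a nontrivial real-valued 2-weight on a finite PCS Σ and τ : Σ × Σ → (0,1) thresholds with τ_{ab} = τ_{ba} = τ_{a*b}. Define G by: (a,b) ∈ G iff {a,a*} ∩ {b,b*} = ∅ and either ω_{ab*} < min(τ_{ab}·ω_∅, ω_{ab}, ω_{a*b*}, ω_{a*b}) or ω_{ab*} = ω_{a*b} = 0, where ω_∅ := ω_{aa} + ω_{a*a*}. Then G is a non-degenerate PCR: no element a satisfies both a ≤_G a* and a* ≤_G a. -/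
universe u v

variable {α : Type*}

/-!
Put `δ(a, b) = ω(a*, b) - ω(a, b*)` and `Δ(a, b) = ω(a, b*) + ω(a*, b)`. The cyclic identity makes
`δ` a cocycle, `δ(a, b) + δ(b, c) = δ(a, c)`, and the triangle-type inequality makes `Δ` a
pseudometric. Every edge of `G` has `δ > 0`, or `δ = Δ = 0`, and this property survives
composition, so it holds along every `G`-chain. If `a ≤_G a*` and `a* ≤_G a`, the two cocycle
values add up to `δ(a, a) = 0`, so both vanish and `ω_∅ = Δ(a, a*) = 0`; then `ω` vanishes.
-/

namespace PCS

variable (P : PCS α) (ω : α → α → ℝ)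

def weightCocycle (a b : α) : ℝ := ω (P.star a) b - ω a (P.star b)

def weightDist (a b : α) : ℝ := ω a (P.star b) + ω (P.star a) b

def IsForward (a b : α) : Prop :=
  0 ≤ P.weightCocycle ω a b ∧ (P.weightCocycle ω a b = 0 → P.weightDist ω a b = 0)

variable {P ω}

theorem weightCocycle_add (hsym : ∀ a b, ω a b = ω b a)
    (hcyc : ∀ a b c, ω a (P.star b) + ω b (P.star c) + ω c (P.star a)
        = ω (P.star a) b + ω (P.star b) c + ω (P.star c) a) (a b c : α) :
    P.weightCocycle ω a b + P.weightCocycle ω b c = P.weightCocycle ω a c := by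
  unfold weightCocycle
  linarith [hcyc a b c, hsym c (P.star a), hsym (P.star c) a]

theorem weightCocycle_self (hsym : ∀ a b, ω a b = ω b a) (a : α) :
    P.weightCocycle ω a a = 0 := by
  simp only [weightCocycle, hsym (P.star a) a, sub_self]

theorem weightDist_self (hsym : ∀ a b, ω a b = ω b a) (hstar0 : ∀ a, ω a (P.star a) = 0)
    (a : α) : P.weightDist ω a a = 0 := by
  simp only [weightDist, hsym (P.star a) a, hstar0, add_zero]

theorem weightDist_nonneg (hnn : ∀ a b, 0 ≤ ω a b) (a b : α) : 0 ≤ P.weightDist ω a b :=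
  add_nonneg (hnn _ _) (hnn _ _)

theorem weightDist_triangle
    (htri : ∀ a b c, ω a (P.star c) + ω (P.star a) c
        ≤ ω a (P.star b) + ω (P.star a) b + ω b (P.star c) + ω (P.star b) c) (a b c : α) :
    P.weightDist ω a c ≤ P.weightDist ω a b + P.weightDist ω b c := by
  unfold weightDist
  linarith [htri a b c]

theorem weightDist_star_right (a : α) :
    P.weightDist ω a (P.star a) = ω a a + ω (P.star a) (P.star a) := by
  rw [weightDist, P.star_star, add_comm]

theorem isForward_of_lt {a b : α} (h : ω a (P.star b) < ω (P.star a) b) :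
    P.IsForward ω a b :=
  ⟨sub_nonneg.2 h.le, fun h0 => absurd (sub_eq_zero.1 h0) h.ne'⟩

theorem isForward_of_eq_zero {a b : α} (h₁ : ω a (P.star b) = 0) (h₂ : ω (P.star a) b = 0) :
    P.IsForward ω a b := by
  simp [IsForward, weightCocycle, weightDist, h₁, h₂]

theorem isForward_refl (hsym : ∀ a b, ω a b = ω b a) (hstar0 : ∀ a, ω a (P.star a) = 0)
    (a : α) : P.IsForward ω a a :=
  ⟨(weightCocycle_self hsym a).ge, fun _ => weightDist_self hsym hstar0 a⟩

theorem IsForward.trans (hsym : ∀ a b, ω a b = ω b a) (hnn : ∀ a b, 0 ≤ ω a b)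
    (hcyc : ∀ a b c, ω a (P.star b) + ω b (P.star c) + ω c (P.star a)
        = ω (P.star a) b + ω (P.star b) c + ω (P.star c) a)
    (htri : ∀ a b c, ω a (P.star c) + ω (P.star a) c
        ≤ ω a (P.star b) + ω (P.star a) b + ω b (P.star c) + ω (P.star b) c)
    {a b c : α} (hab : P.IsForward ω a b) (hbc : P.IsForward ω b c) : P.IsForward ω a c := by
  have hadd := weightCocycle_add hsym hcyc a b c
  refine ⟨hadd ▸ add_nonneg hab.1 hbc.1, fun hac => ?_⟩
  have hΔab := hab.2 (by linarith [hab.1, hbc.1])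
  have hΔbc := hbc.2 (by linarith [hab.1, hbc.1])
  linarith [weightDist_triangle htri a b c, weightDist_nonneg (P := P) hnn a c]

theorem isForward_of_pcrLe (hsym : ∀ a b, ω a b = ω b a) (hnn : ∀ a b, 0 ≤ ω a b)
    (hstar0 : ∀ a, ω a (P.star a) = 0)
    (hcyc : ∀ a b c, ω a (P.star b) + ω b (P.star c) + ω c (P.star a)
        = ω (P.star a) b + ω (P.star b) c + ω (P.star c) a)
    (htri : ∀ a b c, ω a (P.star c) + ω (P.star a) c
        ≤ ω a (P.star b) + ω (P.star a) b + ω b (P.star c) + ω (P.star b) c)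
    {G : Set (α × α)} (hG : ∀ a b, (a, b) ∈ G → P.IsForward ω a b) {a b : α}
    (hle : pcrLe G a b) : P.IsForward ω a b := by
  induction hle with
  | refl => exact isForward_refl hsym hstar0 a
  | tail _ hcd ih => exact ih.trans hsym hnn hcyc htri (hG _ _ hcd)

theorem weight_eq_zero_of_diag_eq_zero (hnn : ∀ a b, 0 ≤ ω a b)
    (hconst : ∀ a b, ω a a + ω (P.star a) (P.star a) = ω b b + ω (P.star b) (P.star b))
    (hsplit : ∀ a b, ω a a = ω a b + ω a (P.star b)) {a : α}
    (ha : ω a a + ω (P.star a) (P.star a) = 0) (b c : α) : ω b c = 0 := by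
  have hbb : ω b b = 0 := by linarith [hconst b a, hnn b b, hnn (P.star b) (P.star b)]
  linarith [hsplit b c, hnn b c, hnn b (P.star c)]

theorem nondegenerate_of_isForward (hsym : ∀ a b, ω a b = ω b a) (hnn : ∀ a b, 0 ≤ ω a b)
    (hstar0 : ∀ a, ω a (P.star a) = 0)
    (hconst : ∀ a b, ω a a + ω (P.star a) (P.star a) = ω b b + ω (P.star b) (P.star b))
    (hsplit : ∀ a b, ω a a = ω a b + ω a (P.star b))
    (hcyc : ∀ a b c, ω a (P.star b) + ω b (P.star c) + ω c (P.star a)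
        = ω (P.star a) b + ω (P.star b) c + ω (P.star c) a)
    (htri : ∀ a b c, ω a (P.star c) + ω (P.star a) c
        ≤ ω a (P.star b) + ω (P.star a) b + ω b (P.star c) + ω (P.star b) c)
    (hnontriv : ∃ a b, ω a b ≠ 0) {G : Set (α × α)}
    (hG : ∀ a b, (a, b) ∈ G → P.IsForward ω a b) : Nondegenerate P G := by
  rintro a ⟨hle, hge⟩
  have h₁ := isForward_of_pcrLe hsym hnn hstar0 hcyc htri hG hle
  have h₂ := isForward_of_pcrLe hsym hnn hstar0 hcyc htri hG hge
  have hsum : P.weightCocycle ω a (P.star a) + P.weightCocycle ω (P.star a) a = 0 := by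
    rw [weightCocycle_add hsym hcyc, weightCocycle_self hsym]
  have hdiag := h₁.2 (by linarith [h₁.1, h₂.1])
  rw [weightDist_star_right] at hdiag
  obtain ⟨b, c, hbc⟩ := hnontriv
  exact hbc (weight_eq_zero_of_diag_eq_zero hnn hconst hsplit hdiag b c)

end PCS

theorem stmt19_general (P : PCS α) (ω : α → α → ℝ)
    (hsym : ∀ a b, ω a b = ω b a) (hnn : ∀ a b, 0 ≤ ω a b)
    (hstar0 : ∀ a, ω a (P.star a) = 0)
    (hconst : ∀ a b, ω a a + ω (P.star a) (P.star a) = ω b b + ω (P.star b) (P.star b))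
    (hsplit : ∀ a b, ω a a = ω a b + ω a (P.star b))
    (hcyc : ∀ a b c, ω a (P.star b) + ω b (P.star c) + ω c (P.star a)
        = ω (P.star a) b + ω (P.star b) c + ω (P.star c) a)
    (htri : ∀ a b c, ω a (P.star c) + ω (P.star a) c
        ≤ ω a (P.star b) + ω (P.star a) b + ω b (P.star c) + ω (P.star b) c)
    (hnontriv : ∃ a b, ω a b ≠ 0)
    (τ : α → α → ℝ)
    (G : Set (α × α))
    (hGdef : ∀ a b, (a, b) ∈ G ↔
      (({a, P.star a} : Set α) ∩ {b, P.star b} = ∅) ∧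
      (ω a (P.star b) <
          min (min (τ a b * (ω a a + ω (P.star a) (P.star a))) (ω a b))
            (min (ω (P.star a) (P.star b)) (ω (P.star a) b)) ∨
        (ω a (P.star b) = 0 ∧ ω (P.star a) b = 0))) :
    Nondegenerate P G := by
  refine PCS.nondegenerate_of_isForward hsym hnn hstar0 hconst hsplit hcyc htri hnontriv
    fun a b hab => ?_
  rcases ((hGdef a b).1 hab).2 with hlt | ⟨h₁, h₂⟩
  · exact PCS.isForward_of_lt (hlt.trans_le ((min_le_right _ _).trans (min_le_right _ _)))
  · exact PCS.isForward_of_eq_zero h₁ h₂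

/-- The thresholded derived relation of a nontrivial real-valued 2-weight is a
non-degenerate PCR. -/
theorem stmt19 [Finite α] (P : PCS α) (ω : α → α → ℝ)
    (hsym : ∀ a b, ω a b = ω b a) (hnn : ∀ a b, 0 ≤ ω a b)
    (h0 : ∀ a, ω P.zero a = 0) (hstar0 : ∀ a, ω a (P.star a) = 0)
    (hconst : ∀ a b, ω a a + ω (P.star a) (P.star a) = ω b b + ω (P.star b) (P.star b))
    (hsplit : ∀ a b, ω a a = ω a b + ω a (P.star b))
    (hcyc : ∀ a b c, ω a (P.star b) + ω b (P.star c) + ω c (P.star a)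
        = ω (P.star a) b + ω (P.star b) c + ω (P.star c) a)
    (htri : ∀ a b c, ω a (P.star c) + ω (P.star a) c
        ≤ ω a (P.star b) + ω (P.star a) b + ω b (P.star c) + ω (P.star b) c)
    (hnontriv : ∃ a b, ω a b ≠ 0)
    (τ : α → α → ℝ) (hτ : ∀ a b, 0 < τ a b ∧ τ a b < 1)
    (hτsym : ∀ a b, τ a b = τ b a ∧ τ a b = τ (P.star a) b)
    (G : Set (α × α))
    (hGdef : ∀ a b, (a, b) ∈ G ↔
      (({a, P.star a} : Set α) ∩ {b, P.star b} = ∅) ∧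
      (ω a (P.star b) <
          min (min (τ a b * (ω a a + ω (P.star a) (P.star a))) (ω a b))
            (min (ω (P.star a) (P.star b)) (ω (P.star a) b)) ∨
        (ω a (P.star b) = 0 ∧ ω (P.star a) b = 0))) :
    Nondegenerate P G :=
  stmt19_general P ω hsym hnn hstar0 hconst hsplit hcyc htri hnontriv τ G hGdef
end
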